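/- arXiv:1910.01696 — 7 statements merged into one kernel-verified Lean document; each statement's English description precedes it below -/
import Mathlib

section
/- Let A be a unital C*-algebra carrying a faithful tracial state τ, and let P_1, …, P_m be projections in A satisfying τ(P_i P_j) = 0 whenever i ≠ j. If moreover ∑_{i,j=1}^m τ(P_i P_j) = 1, then P_i P_j = 0 for all i ≠ j and ∑_{i=1}^m P_i = 1, i.e. {P_i}_{i=1}^m is a projection-valued measure. -/
open scoped ComplexOrder BigOperators

/-- Let A be a unital C*-algebra carrying a faithful tracial state τ,
and let P_1, …, P_m be projections in A satisfying τ(P_i P_j) = 0 whenever i ≠ j.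
If moreover ∑_{i,j} τ(P_i P_j) = 1, then P_i P_j = 0 for all i ≠ j and ∑ P_i = 1,
i.e. {P_i} is a projection-valued measure. -/
theorem stmt1 {A : Type*} [NormedRing A] [StarRing A] [CStarRing A]
    [NormedAlgebra ℂ A] [CompleteSpace A] [StarModule ℂ A]
    (τ : A →ₗ[ℂ] ℂ)
    (hunit : τ 1 = 1)
    (hpos : ∀ a : A, 0 ≤ τ (star a * a))
    (htracial : ∀ a b : A, τ (a * b) = τ (b * a))
    (hfaithful : ∀ a : A, τ (star a * a) = 0 → a = 0)
    (m : ℕ) (P : Fin m → A)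
    (hPsa : ∀ i, star (P i) = P i) (hPidem : ∀ i, P i * P i = P i)
    (horth : ∀ i j, i ≠ j → τ (P i * P j) = 0)
    (hsum : ∑ i, ∑ j, τ (P i * P j) = 1) :
    (∀ i j, i ≠ j → P i * P j = 0) ∧ ∑ i, P i = 1 := by
  have hzero : ∀ i j, i ≠ j → P i * P j = 0 := by
    intro i j hij
    apply hfaithful
    have : star (P i * P j) * (P i * P j) = P j * (P i * P j) := by
      rw [star_mul, hPsa, hPsa]
      rw [mul_assoc, ← mul_assoc (P i) (P i), hPidem]
    rw [this, htracial, mul_assoc, hPidem]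
    exact horth i j hij
  refine ⟨hzero, ?_⟩
  set S : A := ∑ i, P i with hS
  have hSsa : star S = S := by
    simp [hS, hPsa]
  have hSsq : S * S = S := by
    rw [hS, Finset.sum_mul_sum]
    rw [Finset.sum_congr rfl (fun i _ => Finset.sum_eq_single i
      (fun j _ hj => hzero i j (Ne.symm hj)) (by simp))]
    exact Finset.sum_congr rfl fun i _ => hPidem i
  have hτS : τ S = 1 := by
    rw [hS, map_sum]
    rw [← hsum]
    refine Finset.sum_congr rfl fun i _ => ?_
    rw [Finset.sum_eq_single i (fun j _ hj => horth i j (Ne.symm hj)) (by simp),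
      hPidem]
  have key : (1 : A) - S = 0 := by
    apply hfaithful
    have : star ((1 : A) - S) * ((1 : A) - S) = 1 - S := by
      rw [star_sub, star_one, hSsa, sub_mul, one_mul, mul_sub, mul_one, hSsq]
      abel
    rw [this, map_sub, hunit, hτS, sub_self]
  linear_combination (norm := module) -key
end

section
/- Let R be a ring that is an algebra over ℝ, let a, b ∈ ℝ, and let B, C ∈ R be idempotents (B² = B and C² = C). Set H := (aB + bC)² − (a + b)(aB + bC). Then H commutes with B and H commutes with C. Moreover, if A ∈ R commutes with aB + bC, then A commutes with H. -/
lemma aux_comm {R : Type*} [Ring R] (B C : R) (hB : B * B = B) :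
    Commute (B*C + C*B - B - C) B := by
  show _ * _ = _ * _
  noncomm_ring
  rw [hB, ← mul_assoc B B C, hB]
  abel

/-- Let R be a ring that is an algebra over ℝ, a, b ∈ ℝ, and let
B, C ∈ R be idempotents. Set H := (aB + bC)² − (a + b)(aB + bC). Then H commutes
with B and with C; moreover if A commutes with aB + bC then A commutes with H. -/
theorem stmt5 {R : Type*} [Ring R] [Algebra ℝ R] (a b : ℝ) (B C : R)
    (hB : B * B = B) (hC : C * C = C) :
    Commute ((a • B + b • C) ^ 2 - (a + b) • (a • B + b • C)) B ∧
    Commute ((a • B + b • C) ^ 2 - (a + b) • (a • B + b • C)) C ∧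
    (∀ A : R, Commute A (a • B + b • C) →
      Commute A ((a • B + b • C) ^ 2 - (a + b) • (a • B + b • C))) := by
  have hH : (a • B + b • C) ^ 2 - (a + b) • (a • B + b • C)
      = (a * b) • (B*C + C*B - B - C) := by
    simp only [sq, add_mul, mul_add, smul_mul_assoc, mul_smul_comm, smul_smul,
      smul_sub, smul_add, hB, hC]
    module
  refine ⟨?_, ?_, fun A h => (h.pow_right 2).sub_right (h.smul_right _)⟩
  · rw [hH]; exact (aux_comm B C hB).smul_left _
  · rw [hH]
    have : B*C + C*B - B - C = C*B + B*C - C - B := by abel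
    rw [this]
    exact (aux_comm C B hC).smul_left _
end

section
/- Fix n, m ∈ ℕ and identify Fin(nm) with Fin n × Fin m. Let p ∈ C_q^s(nm,2) and define π(p)(i,j|x,y) := p(0,0|(x,i),(y,j)). Then π(p) ∈ C_q^s(n,m) if and only if π(p) ∈ C_ns^s(n,m). -/
/-!
Quantum correlations are automatically synchronous and non-signaling. Conversely, write
`F x i := E (x, i) 0`: these projections realize `π(p)`, and normalisation together with
synchronicity give `τ ((∑ i, F x i - 1) ^ 2) = 0`, i.e. `∑ i, F x i = 1` modulo the null ideal
`N = {a | τ (star a * a) = 0}` of the trace. In a finite-dimensional C⋆-algebra this two-sided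
ideal has a unit `e` which is a central projection, and since `τ` vanishes on `N`, the families
`(1 - e) * F x i + δ_{i, i₀} e` are projection-valued measures realizing the same correlation.
-/

open scoped ComplexOrder BigOperators

/-- A quantum representation: a finite-dimensional unital C*-algebra with a tracial
state τ and, for each experiment x : X, a projection-valued measure (E x i)_{i : Fin m}. -/
structure QRep (X : Type) (m : ℕ) where
  A : Type
  [ring : NormedRing A]
  [starRing : StarRing A]
  [cstar : CStarRing A]
  [alg : NormedAlgebra ℂ A]
  [complete : CompleteSpace A]
  [smod : StarModule ℂ A]
  [fd : FiniteDimensional ℂ A]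
  τ : A →ₗ[ℂ] ℂ
  E : X → Fin m → A
  unit : τ 1 = 1
  pos : ∀ a : A, 0 ≤ τ (star a * a)
  tracial : ∀ a b : A, τ (a * b) = τ (b * a)
  proj_sa : ∀ x i, star (E x i) = E x i
  proj_idem : ∀ x i, E x i * E x i = E x i
  pvm : ∀ x, ∑ i, E x i = 1

attribute [instance] QRep.ring QRep.starRing QRep.cstar QRep.alg
  QRep.complete QRep.smod QRep.fd

/-- Membership in the synchronous quantum correlation set C_q^s:
`p x y i j` denotes p(i,j|x,y). -/
def IsQSyncCorrelation {X : Type} (m : ℕ) (p : X → X → Fin m → Fin m → ℝ) : Prop :=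
  ∃ r : QRep X m, ∀ x y i j, (p x y i j : ℂ) = r.τ (r.E x i * r.E y j)

/-- Membership in the synchronous non-signaling correlation set C_ns^s. -/
def IsSyncNSCorrelation {X : Type} [Fintype X] (m : ℕ)
    (p : X → X → Fin m → Fin m → ℝ) : Prop :=
  (∀ x y i j, 0 ≤ p x y i j) ∧
  (∀ x y, ∑ i, ∑ j, p x y i j = 1) ∧
  (∀ x i j, i ≠ j → p x x i j = 0) ∧
  (∀ x y y' i, ∑ j, p x y i j = ∑ j, p x y' i j) ∧
  (∀ x x' y j, ∑ i, p x y i j = ∑ i, p x' y i j)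

theorem eq_zero_of_forall_nonneg_add_real_mul {c w : ℂ} (h : ∀ t : ℝ, 0 ≤ c + t * w) :
    w = 0 := by
  have hc := Complex.le_def.mp (h 0)
  have h1 := Complex.le_def.mp (h 1)
  simp only [Complex.zero_re, Complex.zero_im, Complex.ofReal_zero, Complex.ofReal_one, zero_mul,
    add_zero, one_mul, Complex.add_re, Complex.add_im] at hc h1
  have him : w.im = 0 := by linarith
  refine Complex.ext ?_ him
  by_contra hre
  have := (Complex.le_def.mp (h (-(c.re + 1) / w.re))).1
  simp only [Complex.zero_re, Complex.add_re, Complex.re_ofReal_mul, div_mul_cancel₀ _ hre] at this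
  linarith

section PositiveFunctional

variable {A : Type*} [Ring A] [Algebra ℂ A] (τ : A →ₗ[ℂ] ℂ)

-- For positive `τ` this left kernel of `(b, a) ↦ τ (b * a)` is `{a | τ (star a * a) = 0}`
-- (Cauchy–Schwarz, see `mem_nullIdeal_of_map_star_mul_self_eq_zero`).
def nullIdeal : Submodule ℂ A where
  carrier := {a | ∀ b, τ (b * a) = 0}
  add_mem' ha hb c := by rw [mul_add, map_add, ha c, hb c, add_zero]
  zero_mem' c := by rw [mul_zero, map_zero]
  smul_mem' z a ha b := by rw [mul_smul_comm, map_smul, ha b, smul_zero]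

variable {τ}

lemma mul_mem_nullIdeal_left (b : A) {a : A} (ha : a ∈ nullIdeal τ) : b * a ∈ nullIdeal τ :=
  fun c ↦ by rw [← mul_assoc]; exact ha _

lemma mul_mem_nullIdeal_right (htr : ∀ a b, τ (a * b) = τ (b * a)) {a : A}
    (ha : a ∈ nullIdeal τ) (b : A) : a * b ∈ nullIdeal τ :=
  fun c ↦ by rw [← mul_assoc, htr, ← mul_assoc]; exact ha _

lemma mem_nullIdeal_of_map_star_mul_self_eq_zero [StarRing A] [StarModule ℂ A]
    (hpos : ∀ a, 0 ≤ τ (star a * a)) {g : A}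
    (hg : τ (star g * g) = 0) : g ∈ nullIdeal τ := by
  have hsum : ∀ x, τ (star x * g) + τ (star g * x) = 0 := fun x ↦
    eq_zero_of_forall_nonneg_add_real_mul (c := τ (star x * x)) fun t ↦ by
      have hexp : star (x + (t : ℂ) • g) * (x + (t : ℂ) • g) = star x * x
          + (t : ℂ) • (star x * g + star g * x) + ((t : ℂ) * t) • (star g * g) := by
        simp only [star_add, star_smul, Complex.star_def, Complex.conj_ofReal, mul_add, add_mul,
          smul_mul_assoc, mul_smul_comm, smul_smul, smul_add]
        abel
      have h := hpos (x + (t : ℂ) • g)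
      rwa [hexp, map_add, map_add, map_smul, map_smul, hg, smul_zero, add_zero, map_add,
        smul_eq_mul] at h
  intro b
  have h1 := hsum (star b)
  have h2 := hsum (Complex.I • star b)
  simp only [star_smul, star_star, Complex.star_def, Complex.conj_I, neg_smul, neg_mul,
    smul_mul_assoc, mul_smul_comm, map_neg, map_smul, smul_eq_mul] at h1 h2
  linear_combination h1 / 2 + Complex.I * h2 / 2
    + (τ (b * g) - τ (star g * star b)) / 2 * Complex.I_sq

end PositiveFunctional

theorem spectrum_finite_of_finiteDimensional {𝕜 A : Type*} [Field 𝕜] [Ring A] [Algebra 𝕜 A]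
    [FiniteDimensional 𝕜 A] (a : A) : (spectrum 𝕜 a).Finite := by
  nontriviality A
  obtain ⟨p, hmonic, hpa⟩ := Algebra.IsIntegral.isIntegral (R := 𝕜) a
  refine (p.finite_setOfPred_isRoot hmonic.ne_zero).subset fun z hz ↦ ?_
  have := spectrum.subset_polynomial_aeval a p ⟨z, hz, rfl⟩
  rwa [Polynomial.aeval_def, hpa, spectrum.zero_eq, Set.mem_singleton_iff] at this

section CStarAlgebra

variable {A : Type*} [CStarAlgebra A] [FiniteDimensional ℂ A]

lemma exists_isStarProjection_mul_eq_self {a : A} (ha : IsSelfAdjoint a) :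
    ∃ c, IsStarProjection (a * c) ∧ a * (a * c) = a := by
  have := ha.isStarNormal
  have hcont : ∀ f : ℂ → ℂ, ContinuousOn f (spectrum ℂ a) :=
    fun f ↦ (spectrum_finite_of_finiteDimensional a).continuousOn f
  have hmul : ∀ f g : ℂ → ℂ, cfc f a * cfc g a = cfc (fun z ↦ f z * g z) a :=
    fun f g ↦ (cfc_mul f g a (hcont f) (hcont g)).symm
  have hsupp : a * cfc (fun z : ℂ ↦ z⁻¹) a = cfc (fun z : ℂ ↦ z * z⁻¹) a := by
    nth_rw 1 [← cfc_id' ℂ a]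
    exact hmul _ _
  -- `a * c` is the support projection of `a`: with `0⁻¹ = 0`, `z * z⁻¹` is the indicator of `z ≠ 0`
  refine ⟨cfc (fun z : ℂ ↦ z⁻¹) a, ⟨?_, ?_⟩, ?_⟩
  · rw [IsIdempotentElem, hsupp, hmul]
    refine cfc_congr fun z _ ↦ ?_
    by_cases hz : z = 0 <;> simp [hz]
  · rw [IsSelfAdjoint, hsupp, ← cfc_star]
    refine cfc_congr fun z _ ↦ ?_
    by_cases hz : z = 0 <;> simp [hz]
  · rw [hsupp]
    nth_rw 1 [← cfc_id' ℂ a]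
    rw [hmul]
    nth_rw 2 [← cfc_id' ℂ a]
    refine cfc_congr fun z _ ↦ ?_
    by_cases hz : z = 0 <;> simp [hz]

theorem exists_central_isStarProjection_unit (I : Submodule ℂ A)
    (hl : ∀ b, ∀ a ∈ I, b * a ∈ I) (hr : ∀ a ∈ I, ∀ b, a * b ∈ I) :
    ∃ e ∈ I, IsStarProjection e ∧ (∀ b, Commute e b) ∧ ∀ a ∈ I, e * a = a := by
  classical
  let : PartialOrder A := CStarAlgebra.spectralOrder A
  have : StarOrderedRing A := CStarAlgebra.spectralOrderedRing A
  obtain ⟨s, hs⟩ := IsNoetherian.noetherian I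
  have hsI : ∀ b ∈ s, b ∈ I := fun b hb ↦ hs ▸ Submodule.subset_span hb
  set a := ∑ b ∈ s, (star b * b + b * star b)
  have haI : a ∈ I := I.sum_mem fun b hb ↦ I.add_mem (hl _ _ (hsI b hb)) (hr _ (hsI b hb) _)
  have ha : IsSelfAdjoint a := by
    simp only [IsSelfAdjoint, a, star_sum, star_add, star_mul, star_star, add_comm]
  obtain ⟨c, he, hae⟩ := exists_isStarProjection_mul_eq_self ha
  set e := a * c
  have hw : star (1 - e) = 1 - e := by rw [star_sub, star_one, he.isSelfAdjoint.star_eq]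
  -- `(1 - e) a (1 - e) = 0` is a sum of the positive elements `star x * x` over the
  -- products of `1 - e` with the generators and their adjoints
  have hgen : ∀ b ∈ s, b * (1 - e) = 0 ∧ star b * (1 - e) = 0 := by
    have hsum : ∑ b ∈ s, (star (b * (1 - e)) * (b * (1 - e))
        + star (star b * (1 - e)) * (star b * (1 - e))) = 0 := by
      calc _ = (1 - e) * (a * (1 - e)) := by
              simp only [a, Finset.sum_mul, Finset.mul_sum, star_mul, star_star, hw, mul_add,
                add_mul, mul_assoc]
        _ = 0 := by rw [mul_sub, mul_one, hae, sub_self, mul_zero]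
    intro b hb
    rw [Finset.sum_eq_zero_iff_of_nonneg fun _ _ ↦
      add_nonneg (star_mul_self_nonneg _) (star_mul_self_nonneg _)] at hsum
    have := (add_eq_zero_iff_of_nonneg (star_mul_self_nonneg _) (star_mul_self_nonneg _)).mp
      (hsum b hb)
    simpa only [CStarRing.star_mul_self_eq_zero_iff] using this
  have hann : I ≤ LinearMap.ker (LinearMap.mulRight ℂ (1 - e)) ⊓
      LinearMap.ker (LinearMap.mulLeft ℂ (1 - e)) := by
    rw [← hs, Submodule.span_le]
    intro b hb
    refine ⟨(hgen b hb).1, ?_⟩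
    simpa [hw] using congrArg star (hgen b hb).2
  have hunit : ∀ x ∈ I, e * x = x ∧ x * e = x := fun x hx ↦ by
    obtain ⟨hxr, hxl⟩ := hann hx
    simp only [SetLike.mem_coe, LinearMap.mem_ker, LinearMap.mulRight_apply,
      LinearMap.mulLeft_apply, mul_sub, sub_mul, mul_one, one_mul, sub_eq_zero] at hxr hxl
    exact ⟨hxl.symm, hxr.symm⟩
  refine ⟨e, hr a haI c, he, fun b ↦ ?_, fun x hx ↦ (hunit x hx).1⟩
  calc e * b = e * b * e := (hunit _ (hr e (hr a haI c) b)).2.symm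
    _ = e * (b * e) := mul_assoc _ _ _
    _ = b * e := (hunit _ (hl b e (hr a haI c))).1

end CStarAlgebra

lemma sum_sub_one_mem_nullIdeal {A : Type*} [Ring A] [StarRing A] [Algebra ℂ A]
    [StarModule ℂ A] {τ : A →ₗ[ℂ] ℂ} (h1 : τ 1 = 1) (hpos : ∀ a, 0 ≤ τ (star a * a))
    {ι : Type*} [Fintype ι] {P : ι → A} (hP : ∀ i, IsStarProjection (P i))
    (hoff : ∀ i j, i ≠ j → τ (P i * P j) = 0) (hsum : ∑ i, ∑ j, τ (P i * P j) = 1) :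
    ∑ i, P i - 1 ∈ nullIdeal τ := by
  set S := ∑ i, P i
  have hS : τ S = 1 := by
    rw [← hsum, map_sum]
    refine Finset.sum_congr rfl fun i _ ↦ ?_
    rw [Finset.sum_eq_single_of_mem i (Finset.mem_univ i) fun j _ hji ↦ hoff i j hji.symm,
      (hP i).isIdempotentElem.eq]
  have hSS : τ (S * S) = 1 := by
    simpa only [S, Finset.sum_mul_sum, map_sum] using hsum
  have hSsa : star (S - 1) = S - 1 := by
    simp only [S, star_sub, star_one, star_sum, (hP _).isSelfAdjoint.star_eq]
  refine mem_nullIdeal_of_map_star_mul_self_eq_zero hpos ?_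
  rw [hSsa, show (S - 1) * (S - 1) = S * S - S - S + 1 by noncomm_ring]
  simp only [map_add, map_sub, hSS, hS, h1]
  ring

lemma IsIdempotentElem.mul_add_one_sub_mul_mul {R : Type*} [Ring R] {e : R}
    (he : IsIdempotentElem e) (hc : ∀ b, Commute e b) (u v u' v' : R) :
    (e * u + (1 - e) * v) * (e * u' + (1 - e) * v') = e * (u * u') + (1 - e) * (v * v') := by
  have hc' : ∀ b, Commute (1 - e) b := fun b ↦ (Commute.one_left b).sub_left (hc b)
  have hew : e * (1 - e) = 0 := by rw [mul_sub, mul_one, he.eq, sub_self]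
  have hwe : (1 - e) * e = 0 := by rw [sub_mul, one_mul, he.eq, sub_self]
  simp only [add_mul, mul_add, ((hc _).symm).mul_mul_mul_comm, ((hc' _).symm).mul_mul_mul_comm,
    he.eq, he.one_sub.eq, hew, hwe, zero_mul, add_zero, zero_add]

theorem exists_qRep_of_sum_sub_one_mem_nullIdeal {A : Type} [CStarAlgebra A]
    [FiniteDimensional ℂ A] {X : Type} {m : ℕ} {τ : A →ₗ[ℂ] ℂ} (h1 : τ 1 = 1)
    (hpos : ∀ a, 0 ≤ τ (star a * a)) (htr : ∀ a b, τ (a * b) = τ (b * a))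
    {F : X → Fin m → A} (hF : ∀ x i, IsStarProjection (F x i)) (i₀ : X → Fin m)
    (hS : ∀ x, ∑ i, F x i - 1 ∈ nullIdeal τ) :
    ∃ r : QRep X m, ∀ x y i j, r.τ (r.E x i * r.E y j) = τ (F x i * F y j) := by
  obtain ⟨e, heN, he, hc, hunit⟩ := exists_central_isStarProjection_unit (nullIdeal τ)
    mul_mem_nullIdeal_left (fun _ ha b ↦ mul_mem_nullIdeal_right htr ha b)
  have hτe : ∀ b, τ (e * b) = 0 := fun b ↦ by rw [htr]; exact heN b
  set δ : X → Fin m → A := fun x i ↦ if i = i₀ x then 1 else 0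
  have hδ : ∀ x i, IsStarProjection (δ x i) := fun x i ↦ by
    by_cases h : i = i₀ x <;> simp [δ, h, IsStarProjection.one, IsStarProjection.zero]
  have hglue := he.isIdempotentElem.mul_add_one_sub_mul_mul hc
  refine ⟨{ A := A
            τ := τ
            E := fun x i ↦ e * δ x i + (1 - e) * F x i
            unit := h1
            pos := hpos
            tracial := htr
            proj_sa := fun x i ↦ ?_
            proj_idem := fun x i ↦ ?_
            pvm := fun x ↦ ?_ }, fun x y i j ↦ ?_⟩
  · simp only [star_add, star_mul, star_sub, star_one, he.isSelfAdjoint.star_eq,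
      (hδ x i).isSelfAdjoint.star_eq, (hF x i).isSelfAdjoint.star_eq, (hc _).eq,
      ((Commute.one_left _).sub_left (hc _)).eq]
  · rw [hglue, (hδ x i).isIdempotentElem.eq, (hF x i).isIdempotentElem.eq]
  · have hw : (1 - e) * ∑ i, F x i = 1 - e := by
      rw [← sub_eq_zero, ← mul_sub_one, sub_mul, one_mul, hunit _ (hS x), sub_self]
    simp only [Finset.sum_add_distrib, ← Finset.mul_sum, δ, Finset.sum_ite_eq', Finset.mem_univ,
      if_true, mul_one, hw, add_sub_cancel]
  · show τ ((e * δ x i + (1 - e) * F x i) * (e * δ y j + (1 - e) * F y j)) = _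
    rw [hglue, map_add, hτe, zero_add, sub_mul, one_mul, map_sub, hτe, sub_zero]

namespace QRep

variable {X : Type} {m : ℕ} (r : QRep X m)

lemma tau_mul_nonneg (x y : X) (i j : Fin m) : 0 ≤ r.τ (r.E x i * r.E y j) := by
  have : r.τ (star (r.E y j * r.E x i) * (r.E y j * r.E x i)) = r.τ (r.E x i * r.E y j) := by
    rw [star_mul, r.proj_sa, r.proj_sa, mul_assoc, ← mul_assoc (r.E y j), r.proj_idem,
      ← mul_assoc, r.tracial, ← mul_assoc, r.proj_idem, r.tracial]
  exact this ▸ r.pos _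

lemma sum_tau_mul_right (x y : X) (i : Fin m) :
    ∑ j, r.τ (r.E x i * r.E y j) = r.τ (r.E x i) := by
  rw [← map_sum, ← Finset.mul_sum, r.pvm, mul_one]

lemma sum_tau_mul_left (x y : X) (j : Fin m) :
    ∑ i, r.τ (r.E x i * r.E y j) = r.τ (r.E y j) := by
  rw [← map_sum, ← Finset.sum_mul, r.pvm, one_mul]

lemma sum_tau (x : X) : ∑ i, r.τ (r.E x i) = 1 := by
  rw [← map_sum, r.pvm, r.unit]

end QRep

theorem IsQSyncCorrelation.isSyncNSCorrelation {X : Type} [Fintype X] {m : ℕ}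
    {p : X → X → Fin m → Fin m → ℝ} (hp : IsQSyncCorrelation m p) : IsSyncNSCorrelation m p := by
  obtain ⟨r, hr⟩ := hp
  have hrow : ∀ x y i, ((∑ j, p x y i j : ℝ) : ℂ) = r.τ (r.E x i) := fun x y i ↦ by
    simp only [Complex.ofReal_sum, hr, r.sum_tau_mul_right]
  have hcol : ∀ x y j, ((∑ i, p x y i j : ℝ) : ℂ) = r.τ (r.E y j) := fun x y j ↦ by
    simp only [Complex.ofReal_sum, hr, r.sum_tau_mul_left]
  have hnonneg : ∀ x y i j, 0 ≤ p x y i j := fun x y i j ↦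
    Complex.zero_le_real.mp (hr x y i j ▸ r.tau_mul_nonneg x y i j)
  refine ⟨hnonneg, fun x y ↦ ?_, fun x i j hij ↦ ?_, fun x y y' i ↦ ?_, fun x x' y j ↦ ?_⟩
  · have : ((∑ i, ∑ j, p x y i j : ℝ) : ℂ) = 1 := by
      rw [Complex.ofReal_sum]
      simp only [hrow, r.sum_tau]
    exact_mod_cast this
  · -- the diagonal entry alone already accounts for the whole row sum
    have hdiag : p x x i i = ∑ j, p x x i j :=
      Complex.ofReal_injective <| by rw [hrow, hr, r.proj_idem]
    rw [← Finset.add_sum_erase _ _ (Finset.mem_univ i), left_eq_add] at hdiag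
    exact (Finset.sum_eq_zero_iff_of_nonneg fun j _ ↦ hnonneg x x i j).mp hdiag j
      (Finset.mem_erase.mpr ⟨hij.symm, Finset.mem_univ j⟩)
  · exact_mod_cast (hrow x y i).trans (hrow x y' i).symm
  · exact_mod_cast (hcol x y j).trans (hcol x' y j).symm

theorem isQSyncCorrelation_of_isStarProjection {A : Type} [CStarAlgebra A]
    [FiniteDimensional ℂ A] {X : Type} {m : ℕ} {τ : A →ₗ[ℂ] ℂ} (h1 : τ 1 = 1)
    (hpos : ∀ a, 0 ≤ τ (star a * a)) (htr : ∀ a b, τ (a * b) = τ (b * a))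
    {F : X → Fin m → A} (hF : ∀ x i, IsStarProjection (F x i))
    {q : X → X → Fin m → Fin m → ℝ} (hq : ∀ x y i j, (q x y i j : ℂ) = τ (F x i * F y j))
    (hsum : ∀ x, ∑ i, ∑ j, q x x i j = 1) (hsync : ∀ x i j, i ≠ j → q x x i j = 0) :
    IsQSyncCorrelation m q := by
  have hm : ∀ x : X, Nonempty (Fin m) := fun x ↦ by
    by_contra h
    simpa [not_nonempty_iff.mp h] using hsum x
  have hS : ∀ x, ∑ i, F x i - 1 ∈ nullIdeal τ := fun x ↦
    sum_sub_one_mem_nullIdeal h1 hpos (hF x)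
      (fun i j hij ↦ by rw [← hq, hsync x i j hij, Complex.ofReal_zero])
      (by simp only [← hq]; exact_mod_cast hsum x)
  obtain ⟨r, hr⟩ := exists_qRep_of_sum_sub_one_mem_nullIdeal h1 hpos htr hF
    (fun x ↦ (hm x).some) hS
  exact ⟨r, fun x y i j ↦ (hq x y i j).trans (hr x y i j).symm⟩

/-- identifying Fin (nm) with Fin n × Fin m, for p ∈ C_q^s(nm,2) and
π(p)(i,j|x,y) := p(0,0|(x,i),(y,j)), we have π(p) ∈ C_q^s(n,m) ↔ π(p) ∈ C_ns^s(n,m). -/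
theorem stmt8 (n m : ℕ)
    (p : (Fin n × Fin m) → (Fin n × Fin m) → Fin 2 → Fin 2 → ℝ)
    (hp : IsQSyncCorrelation 2 p) :
    IsQSyncCorrelation m (fun x y i j => p (x, i) (y, j) 0 0) ↔
      IsSyncNSCorrelation m (fun x y i j => p (x, i) (y, j) 0 0) := by
  refine ⟨IsQSyncCorrelation.isSyncNSCorrelation, fun h ↦ ?_⟩
  obtain ⟨r, hr⟩ := hp
  let : CStarAlgebra r.A := {}
  exact isQSyncCorrelation_of_isStarProjection r.unit r.pos r.tracial
    (fun x i ↦ ⟨r.proj_idem (x, i) 0, r.proj_sa (x, i) 0⟩) (fun x y i j ↦ hr (x, i) (y, j) 0 0)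
    (fun x ↦ h.2.1 x x) h.2.2.1
end

section
/- Fix n ∈ ℕ. Suppose there exists w ∈ D_qc(n) with w ∉ D_qa(n). Then there exist y ∈ [0,1]^n and a vector x = (x_{ij})_{0 ≤ i < j < n} of real numbers such that u_q(y,x) ≠ u_qc(y,x), where u_r(y,x) := sup{ ∑_{i<j} x_{ij} w_{ij} : w ∈ S_y[D_r(n)] }. -/
open scoped ComplexOrder BigOperators

/-- A tracial representation of n projections: a unital C*-algebra with a tracial
state τ and projections P 0, …, P (n-1). -/
structure ProjRep (n : ℕ) where
  A : Type
  [ring : NormedRing A]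
  [starRing : StarRing A]
  [cstar : CStarRing A]
  [alg : NormedAlgebra ℂ A]
  [complete : CompleteSpace A]
  [smod : StarModule ℂ A]
  τ : A →ₗ[ℂ] ℂ
  P : Fin n → A
  unit : τ 1 = 1
  pos : ∀ a : A, 0 ≤ τ (star a * a)
  tracial : ∀ a b : A, τ (a * b) = τ (b * a)
  proj_sa : ∀ i, star (P i) = P i
  proj_idem : ∀ i, P i * P i = P i

attribute [instance] ProjRep.ring ProjRep.starRing ProjRep.cstar ProjRep.alg
  ProjRep.complete ProjRep.smod

/-- A finite-dimensional tracial representation of n projections. -/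
structure FinProjRep (n : ℕ) extends ProjRep n where
  [fd : FiniteDimensional ℂ toProjRep.A]

/-- D_qc(n): real symmetric n×n matrices of the form w i j = τ(P i * P j). -/
def Dqc (n : ℕ) : Set (Matrix (Fin n) (Fin n) ℝ) :=
  {w | w.IsSymm ∧ ∃ r : ProjRep n, ∀ i j, (w i j : ℂ) = r.τ (r.P i * r.P j)}

/-- D_q(n): the same with a finite-dimensional C*-algebra. -/
def Dq (n : ℕ) : Set (Matrix (Fin n) (Fin n) ℝ) :=
  {w | w.IsSymm ∧ ∃ r : FinProjRep n, ∀ i j, (w i j : ℂ) = r.τ (r.P i * r.P j)}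

/-- D_qa(n): the closure of D_q(n). -/
def Dqa (n : ℕ) : Set (Matrix (Fin n) (Fin n) ℝ) := closure (Dq n)

/-- The y-slice S_y[D] of a set D of n×n matrices: vectors (w i j)_{i<j} that extend
to an element of D with diagonal y (entries with ¬(i<j) are unconstrained). -/
def ySlice {n : ℕ} (D : Set (Matrix (Fin n) (Fin n) ℝ)) (y : Fin n → ℝ) :
    Set (Fin n → Fin n → ℝ) :=
  {w | ∃ p ∈ D, (∀ i j : Fin n, i < j → p i j = w i j) ∧ ∀ i, p i i = y i}

/-- u_r(y,x) := sup { ∑_{i<j} x i j * w i j : w ∈ S_y[D_r(n)] }. -/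
noncomputable def uVal {n : ℕ} (D : Set (Matrix (Fin n) (Fin n) ℝ))
    (y : Fin n → ℝ) (x : Fin n → Fin n → ℝ) : ℝ :=
  sSup ((fun w => ∑ i, ∑ j, if i < j then x i j * w i j else 0) '' ySlice D y)


/-!
Since `Dq n` is convex (weighted direct sums of representations), `Dqa n` is closed and convex,
so Hahn–Banach gives a functional `f` and a level `u` with `f < u` on `Dqa n` and `f w > u`.
On symmetric matrices with diagonal `y = diag w`, `f` is `upperPairing x + C` for some `x`, `C`,
whence `u_q(y, x) ≤ u - C < u_qc(y, x)`. Neither supremum is a junk value: every `y ∈ [0,1]ⁿ` is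
the diagonal of a point of `Dq n` (a convex combination of one-dimensional representations by
scalars `0`, `1`), and the entries of points of `Dqc n` lie in `[0, 1]`.
-/

open Set

namespace ProjRep

variable {n : ℕ} (r : ProjRep n)

lemma isStarProjection_P (i : Fin n) : IsStarProjection (r.P i) :=
  ⟨r.proj_idem i, r.proj_sa i⟩

/-- By traciality `τ (p * q) = τ (q * p * q) = τ (star (p * q) * (p * q))`. -/
lemma τ_mul_nonneg {p q : r.A} (hp : IsStarProjection p) (hq : IsStarProjection q) :
    0 ≤ r.τ (p * q) := by
  have h : r.τ (p * q) = r.τ (star (p * q) * (p * q)) := by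
    rw [star_mul, hp.isSelfAdjoint.star_eq, hq.isSelfAdjoint.star_eq, ← mul_assoc,
      mul_assoc q, hp.isIdempotentElem.eq, r.tracial (q * p), ← mul_assoc, hq.isIdempotentElem.eq,
      r.tracial]
  exact h ▸ r.pos _

end ProjRep

lemma entry_mem_Icc_of_mem_Dqc {n : ℕ} {w : Matrix (Fin n) (Fin n) ℝ} (hw : w ∈ Dqc n)
    (i j : Fin n) :
    w i j ∈ Icc (0 : ℝ) 1 := by
  obtain ⟨-, r, hr⟩ := hw
  have hPi := r.isStarProjection_P i
  have hPj := r.isStarProjection_P j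
  have h₀ : (0 : ℂ) ≤ w i j := hr i j ▸ r.τ_mul_nonneg hPi hPj
  have hτPi : r.τ (r.P i) = w i i := by rw [hr, hPi.isIdempotentElem.eq]
  have h₁ : (w i j : ℂ) ≤ w i i := by
    have := r.τ_mul_nonneg hPi hPj.one_sub
    rwa [mul_sub, mul_one, map_sub, hτPi, ← hr, sub_nonneg] at this
  have h₂ : (w i i : ℂ) ≤ 1 := by
    have := r.τ_mul_nonneg (IsStarProjection.one _) hPi.one_sub
    rwa [one_mul, map_sub, r.unit, hτPi, sub_nonneg] at this
  exact ⟨mod_cast h₀, mod_cast h₁.trans h₂⟩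

noncomputable def ProjRep.convexComb {n : ℕ} (r₁ r₂ : ProjRep n) {a b : ℝ} (ha : 0 ≤ a)
    (hb : 0 ≤ b) (hab : a + b = 1) : ProjRep n where
  A := r₁.A × r₂.A
  τ := (a : ℂ) • (r₁.τ ∘ₗ LinearMap.fst ℂ r₁.A r₂.A) +
    (b : ℂ) • (r₂.τ ∘ₗ LinearMap.snd ℂ r₁.A r₂.A)
  P i := (r₁.P i, r₂.P i)
  unit := by simp [r₁.unit, r₂.unit, ← Complex.ofReal_add, hab]
  pos x := add_nonneg (mul_nonneg (Complex.zero_le_real.mpr ha) (r₁.pos x.1))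
    (mul_nonneg (Complex.zero_le_real.mpr hb) (r₂.pos x.2))
  tracial x z := by simp [r₁.tracial x.1, r₂.tracial x.2]
  proj_sa i := Prod.ext (r₁.proj_sa i) (r₂.proj_sa i)
  proj_idem i := Prod.ext (r₁.proj_idem i) (r₂.proj_idem i)

noncomputable def FinProjRep.convexComb {n : ℕ} (r₁ r₂ : FinProjRep n) {a b : ℝ} (ha : 0 ≤ a)
    (hb : 0 ≤ b) (hab : a + b = 1) : FinProjRep n :=
  have := r₁.fd
  have := r₂.fd
  { toProjRep := r₁.toProjRep.convexComb r₂.toProjRep ha hb hab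
    fd := inferInstanceAs (FiniteDimensional ℂ (r₁.A × r₂.A)) }

lemma convex_Dq (n : ℕ) : Convex ℝ (Dq n) := by
  rintro p ⟨hp, r₁, hr₁⟩ q ⟨hq, r₂, hr₂⟩ a b ha hb hab
  refine ⟨(hp.smul a).add (hq.smul b), r₁.convexComb r₂ ha hb hab, fun i j => ?_⟩
  simp only [FinProjRep.convexComb, ProjRep.convexComb, Matrix.add_apply, Matrix.smul_apply,
    smul_eq_mul, Complex.ofReal_add, Complex.ofReal_mul, hr₁, hr₂]
  rfl

noncomputable def FinProjRep.ofScalars {n : ℕ} (s : Fin n → ℝ)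
    (hs : ∀ i, s i ∈ ({0, 1} : Set ℝ)) : FinProjRep n where
  A := ℂ
  τ := LinearMap.id
  P i := s i
  unit := rfl
  pos := star_mul_self_nonneg
  tracial := mul_comm
  proj_sa i := Complex.conj_ofReal _
  proj_idem i := by
    obtain h | h : s i = 0 ∨ s i = 1 := hs i
    all_goals simp [h]

lemma surjOn_diag_Dq (n : ℕ) :
    SurjOn Matrix.diag (Dq n) (univ.pi fun _ => Icc (0 : ℝ) 1) := by
  have hvert : (univ.pi fun _ => ({0, 1} : Set ℝ)) ⊆ Matrix.diag '' Dq n := by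
    intro s hs
    refine ⟨Matrix.vecMulVec s s, ⟨?_, FinProjRep.ofScalars s fun i => hs i trivial, ?_⟩, ?_⟩
    · exact Matrix.IsSymm.ext fun i j => mul_comm _ _
    · intro i j
      simp only [FinProjRep.ofScalars, Matrix.vecMulVec_apply, Complex.ofReal_mul]
      rfl
    · ext i
      obtain h | h : s i = 0 ∨ s i = 1 := hs i trivial
      all_goals simp [Matrix.vecMulVec_apply, h]
  have hconv : Convex ℝ (Matrix.diag '' Dq n) :=
    (convex_Dq n).linear_image (Matrix.diagLinearMap (Fin n) ℝ ℝ)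
  simpa [SurjOn, convexHull_pi, convexHull_pair, segment_eq_Icc] using convexHull_min hvert hconv

lemma LinearMap.apply_eq_sum_mul_single {ι κ R : Type*} [Fintype ι] [Fintype κ] [DecidableEq ι]
    [DecidableEq κ] [CommSemiring R] (f : Matrix ι κ R →ₗ[R] R) (p : Matrix ι κ R) :
    f p = ∑ i, ∑ j, p i j * f (Matrix.single i j 1) := by
  conv_lhs => rw [Matrix.matrix_eq_sum_single p]
  simp only [map_sum]
  refine Finset.sum_congr rfl fun i _ => Finset.sum_congr rfl fun j _ => ?_
  rw [← smul_eq_mul, ← f.map_smul, Matrix.smul_single, smul_eq_mul, mul_one]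

lemma Finset.sum_sum_eq_sum_sum_lt_add_sum_diag {ι M : Type*} [Fintype ι] [LinearOrder ι]
    [AddCommMonoid M] (F : ι → ι → M) :
    ∑ i, ∑ j, F i j = (∑ i, ∑ j, if i < j then F i j + F j i else 0) + ∑ i, F i i := by
  have hswap : (∑ i, ∑ j, if i < j then F j i else 0) = ∑ i, ∑ j, if j < i then F i j else 0 :=
    Finset.sum_comm
  have hdiag : ∑ i, F i i = ∑ i, ∑ j, if i = j then F i j else 0 := by simp
  simp only [ite_add_zero, Finset.sum_add_distrib]
  rw [hswap, hdiag]
  simp only [← Finset.sum_add_distrib]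
  refine Finset.sum_congr rfl fun i _ => Finset.sum_congr rfl fun j _ => ?_
  rcases lt_trichotomy i j with h | rfl | h
  · simp [h, h.ne, h.not_gt]
  · simp
  · simp [h, h.ne', h.not_gt]

section UpperPairing

variable {ι : Type*} [Fintype ι] [LinearOrder ι]

def upperPairing (x w : ι → ι → ℝ) : ℝ :=
  ∑ i, ∑ j, if i < j then x i j * w i j else 0

lemma upperPairing_congr_right {x p q : ι → ι → ℝ} (h : ∀ i j, i < j → p i j = q i j) :
    upperPairing x p = upperPairing x q := by
  unfold upperPairing
  refine Finset.sum_congr rfl fun i _ => Finset.sum_congr rfl fun j _ => ?_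
  split_ifs with hij
  · rw [h i j hij]
  · rfl

lemma abs_upperPairing_le {x w : ι → ι → ℝ} (hw : ∀ i j, i < j → |w i j| ≤ 1) :
    |upperPairing x w| ≤ ∑ i, ∑ j, |x i j| := by
  unfold upperPairing
  refine (Finset.abs_sum_le_sum_abs _ _).trans (Finset.sum_le_sum fun i _ => ?_)
  refine (Finset.abs_sum_le_sum_abs _ _).trans (Finset.sum_le_sum fun j _ => ?_)
  split_ifs with hij
  · rw [abs_mul]
    exact mul_le_of_le_one_right (abs_nonneg _) (hw i j hij)
  · simp

variable [DecidableEq ι]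

lemma exists_upperPairing_add_eq (f : Matrix ι ι ℝ →ₗ[ℝ] ℝ) (y : ι → ℝ) :
    ∃ (x : ι → ι → ℝ) (C : ℝ), ∀ p : Matrix ι ι ℝ, p.IsSymm → p.diag = y →
      f p = upperPairing x p + C := by
  set c : ι → ι → ℝ := fun i j => f (Matrix.single i j 1)
  refine ⟨fun i j => c i j + c j i, ∑ i, y i * c i i, fun p hp hpy => ?_⟩
  rw [f.apply_eq_sum_mul_single, Finset.sum_sum_eq_sum_sum_lt_add_sum_diag, ← hpy]
  congr 1
  refine Finset.sum_congr rfl fun i _ => Finset.sum_congr rfl fun j _ => ?_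
  split_ifs
  · rw [hp.apply i j]
    ring
  · rfl

end UpperPairing

section Slices

variable {n : ℕ}

lemma uVal_eq_sSup (D : Set (Matrix (Fin n) (Fin n) ℝ)) (y : Fin n → ℝ)
    (x : Fin n → Fin n → ℝ) :
    uVal D y x = sSup (upperPairing x '' ySlice D y) :=
  rfl

lemma ySlice_Dq_nonempty {y : Fin n → ℝ} (hy : ∀ i, y i ∈ Icc (0 : ℝ) 1) :
    (ySlice (Dq n) y).Nonempty := by
  obtain ⟨p, hp, hpy⟩ := surjOn_diag_Dq n fun i _ => hy i
  exact ⟨p, p, hp, fun _ _ _ => rfl, congr_fun hpy⟩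

lemma bddAbove_upperPairing_ySlice_Dqc (x : Fin n → Fin n → ℝ) (y : Fin n → ℝ) :
    BddAbove (upperPairing x '' ySlice (Dqc n) y) := by
  refine ⟨∑ i, ∑ j, |x i j|, ?_⟩
  rintro _ ⟨w, ⟨p, hp, hpw, -⟩, rfl⟩
  refine le_of_abs_le (abs_upperPairing_le fun i j hij => ?_)
  rw [← hpw i j hij, abs_le]
  have := entry_mem_Icc_of_mem_Dqc hp i j
  constructor <;> linarith [this.1, this.2]

end Slices

/-- if some w ∈ D_qc(n) is not in D_qa(n), then there are y ∈ [0,1]^n and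
a vector x = (x i j)_{i<j} with u_q(y,x) ≠ u_qc(y,x). -/
theorem stmt12 (n : ℕ) (h : ∃ w, w ∈ Dqc n ∧ w ∉ Dqa n) :
    ∃ y : Fin n → ℝ, (∀ i, y i ∈ Set.Icc (0 : ℝ) 1) ∧
      ∃ x : Fin n → Fin n → ℝ, uVal (Dq n) y x ≠ uVal (Dqc n) y x := by
  obtain ⟨w, hw, hwDqa⟩ := h
  -- `Matrix` has no `LocallyConvexSpace` instance of its own.
  have : LocallyConvexSpace ℝ (Matrix (Fin n) (Fin n) ℝ) :=
    inferInstanceAs (LocallyConvexSpace ℝ (Fin n → Fin n → ℝ))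
  obtain ⟨f, u, hf_lt, hu_lt⟩ :=
    geometric_hahn_banach_closed_point (convex_Dq n).closure isClosed_closure hwDqa
  obtain ⟨x, C, hf⟩ := exists_upperPairing_add_eq f.toLinearMap w.diag
  simp only [ContinuousLinearMap.coe_coe] at hf
  have hwy : ∀ i, w.diag i ∈ Icc (0 : ℝ) 1 := fun i => entry_mem_Icc_of_mem_Dqc hw i i
  refine ⟨w.diag, hwy, x, ne_of_lt ?_⟩
  rw [uVal_eq_sSup, uVal_eq_sSup]
  calc sSup (upperPairing x '' ySlice (Dq n) w.diag) ≤ u - C := by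
        refine csSup_le ((ySlice_Dq_nonempty hwy).image _) ?_
        rintro _ ⟨v, ⟨p, hp, hpv, hpy⟩, rfl⟩
        rw [← upperPairing_congr_right hpv]
        linarith [hf p hp.1 (funext hpy), hf_lt p (subset_closure hp)]
    _ < upperPairing x w := by linarith [hf w hw.1 rfl]
    _ ≤ sSup (upperPairing x '' ySlice (Dqc n) w.diag) :=
        le_csSup (bddAbove_upperPairing_ySlice_Dqc x _)
          ⟨w, ⟨w, hw, fun _ _ _ => rfl, fun _ => rfl⟩, rfl⟩
end

section
/- Let A be a unital C*-algebra carrying a faithful tracial state τ, and let a, b ∈ A be hermitian elements (a* = a, b* = b) with ab ≠ ba. Then there exists a hermitian element H ∈ A such that the function f : ℝ → ℝ, f(t) := Re τ(a · exp(itH) · b · exp(−itH)), has derivative f′(0) > 0. -/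
open scoped ComplexOrder

/-!
Take `H = -i[a, b]`, so that `exp(itH) = exp(t[a, b])`. Differentiating
`a · exp(t[a, b]) · b · exp(-t[a, b])` at `0` gives `a[a, b]b - ab[a, b]`, whose trace is
`τ([a, b]* [a, b])` by traciality, since `[a, b]* = -[a, b]`. This is positive by faithfulness.
Positive functionals on a C*-algebra are automatically continuous, so the derivative passes
through `τ`.
-/

theorem map_nonneg_of_map_star_mul_self_nonneg {A B F : Type*} [NonUnitalSemiring A]
    [PartialOrder A] [StarRing A] [StarOrderedRing A] [AddCommMonoid B] [PartialOrder B]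
    [IsOrderedAddMonoid B] [FunLike F A B] [AddMonoidHomClass F A B] (f : F)
    (hf : ∀ x, 0 ≤ f (star x * x)) {z : A} (hz : 0 ≤ z) : 0 ≤ f z := by
  rw [StarOrderedRing.nonneg_iff] at hz
  induction hz using AddSubmonoid.closure_induction with
  | mem x hx => obtain ⟨s, rfl⟩ := hx; exact hf s
  | zero => simp
  | add x y _ _ hx hy => rw [map_add]; exact add_nonneg hx hy

theorem LinearMap.continuous_of_map_star_mul_self_nonneg {A : Type*} [CStarAlgebra A]
    (τ : A →ₗ[ℂ] ℂ) (hτ : ∀ x, 0 ≤ τ (star x * x)) : Continuous τ := by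
  let _ : PartialOrder A := CStarAlgebra.spectralOrder A
  have : StarOrderedRing A := CStarAlgebra.spectralOrderedRing A
  exact map_continuous <|
    PositiveLinearMap.mk₀ τ fun _ ↦ map_nonneg_of_map_star_mul_self_nonneg τ hτ

theorem mul_sub_mul_mem_skewAdjoint {R : Type*} [Ring R] [StarRing R] {a b : R}
    (ha : IsSelfAdjoint a) (hb : IsSelfAdjoint b) : a * b - b * a ∈ skewAdjoint R := by
  rw [skewAdjoint.mem_iff, star_sub, star_mul, star_mul, ha.star_eq, hb.star_eq, neg_sub]

theorem map_mul_commutator_mul_sub {A M F : Type*} [Ring A] [StarRing A] [AddCommGroup M]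
    [FunLike F A M] [AddMonoidHomClass F A M] (τ : F) (hτ : ∀ x y, τ (x * y) = τ (y * x))
    {a b : A} (ha : IsSelfAdjoint a) (hb : IsSelfAdjoint b) :
    τ (a * (a * b - b * a) * b - a * b * (a * b - b * a)) =
      τ (star (a * b - b * a) * (a * b - b * a)) := by
  have hcyc : τ (a * (a * b - b * a) * b) = τ (b * a * (a * b - b * a)) := by
    rw [hτ _ b, mul_assoc]
  rw [map_sub, hcyc, ← map_sub, skewAdjoint.mem_iff.mp (mul_sub_mul_mem_skewAdjoint ha hb)]
  congr 1
  noncomm_ring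

section Exponential

variable {A : Type*} [NormedRing A] [NormedAlgebra ℂ A] [CompleteSpace A]

theorem hasDerivAt_exp_mul_ofReal_smul (z : ℂ) (x : A) :
    HasDerivAt (fun t : ℝ => NormedSpace.exp ((z * t) • x)) (z • x) 0 := by
  have h : (fun t : ℝ => NormedSpace.exp ((z * t) • x)) =
      fun t : ℝ => NormedSpace.exp (t • z • x) := by
    funext t
    rw [mul_comm, mul_smul, Complex.coe_smul]
  rw [h]
  simpa using hasDerivAt_exp_smul_const (𝕂 := ℝ) (z • x) 0

theorem hasDerivAt_mul_exp_mul_mul_exp (a b H : A) :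
    HasDerivAt (fun t : ℝ => a * NormedSpace.exp ((Complex.I * t) • H) * b *
        NormedSpace.exp ((-(Complex.I * t)) • H))
      (a * (Complex.I • H) * b - a * b * (Complex.I • H)) 0 := by
  have hneg := hasDerivAt_exp_mul_ofReal_smul (-Complex.I) H
  simp only [neg_mul] at hneg
  have h := ((hasDerivAt_exp_mul_ofReal_smul Complex.I H |>.const_mul a).mul_const b).mul hneg
  convert h using 1
  · funext t; simp
  · simp [sub_eq_add_neg]

end Exponential

theorem stmt13_general {A : Type*} [NormedRing A] [StarRing A] [CStarRing A]
    [NormedAlgebra ℂ A] [CompleteSpace A] [StarModule ℂ A]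
    (τ : A →ₗ[ℂ] ℂ)
    (hpos : ∀ x : A, 0 ≤ τ (star x * x))
    (htracial : ∀ x y : A, τ (x * y) = τ (y * x))
    (hfaithful : ∀ x : A, τ (star x * x) = 0 → x = 0)
    (a b : A) (ha : star a = a) (hb : star b = b) (hab : a * b ≠ b * a) :
    ∃ H : A, star H = H ∧ ∃ d : ℝ, 0 < d ∧
      HasDerivAt (fun t : ℝ =>
        (τ (a * NormedSpace.exp ((Complex.I * (t : ℂ)) • H) * b *
            NormedSpace.exp ((-(Complex.I * (t : ℂ))) • H))).re) d 0 := by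
  let _ : CStarAlgebra A := { }
  have hc_skew := mul_sub_mul_mem_skewAdjoint ha hb
  set c := a * b - b * a
  have hc_pos : 0 < τ (star c * c) := (hpos c).lt_of_ne' (mt (hfaithful c) (sub_ne_zero.mpr hab))
  have hIc : Complex.I • (-Complex.I) • c = c := by
    rw [smul_smul, mul_neg, Complex.I_mul_I, neg_neg, one_smul]
  refine ⟨(-Complex.I) • c, ?_, (τ (star c * c)).re, (Complex.pos_iff.mp hc_pos).1, ?_⟩
  · exact isSelfAdjoint_smul_of_mem_skewAdjoint (by simp [skewAdjoint.mem_iff]) hc_skew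
  have hderiv := hasDerivAt_mul_exp_mul_mul_exp a b ((-Complex.I) • c)
  rw [hIc] at hderiv
  let τc : A →L[ℂ] ℂ := ⟨τ, τ.continuous_of_map_star_mul_self_nonneg hpos⟩
  have h := (Complex.reCLM.comp (τc.restrictScalars ℝ)).hasFDerivAt.comp_hasDerivAt 0 hderiv
  exact h.congr_deriv (congrArg Complex.re (map_mul_commutator_mul_sub τ htracial ha hb))

/-- Dykema–Paulsen–Prakash: let A be a unital C*-algebra with a faithful
tracial state τ and let a, b be hermitian elements with ab ≠ ba. Then there is a hermitian
H ∈ A such that f(t) := Re τ(a · exp(itH) · b · exp(−itH)) has derivative f′(0) > 0. -/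
theorem stmt13 {A : Type*} [NormedRing A] [StarRing A] [CStarRing A]
    [NormedAlgebra ℂ A] [CompleteSpace A] [StarModule ℂ A]
    (τ : A →ₗ[ℂ] ℂ)
    (hunit : τ 1 = 1)
    (hpos : ∀ x : A, 0 ≤ τ (star x * x))
    (htracial : ∀ x y : A, τ (x * y) = τ (y * x))
    (hfaithful : ∀ x : A, τ (star x * x) = 0 → x = 0)
    (a b : A) (ha : star a = a) (hb : star b = b) (hab : a * b ≠ b * a) :
    ∃ H : A, star H = H ∧ ∃ d : ℝ, 0 < d ∧
      HasDerivAt (fun t : ℝ =>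
        (τ (a * NormedSpace.exp ((Complex.I * (t : ℂ)) • H) * b *
            NormedSpace.exp ((-(Complex.I * (t : ℂ))) • H))).re) d 0 :=
  stmt13_general τ hpos htracial hfaithful a b ha hb hab
end

section
/- Let a, b be nonzero real numbers, let t ∈ (0,1), and set s := √(t(1−t)). In M₂(ℂ), let A := [[1,0],[0,0]] and B := [[t,s],[s,1−t]], and let C ∈ M₂(ℂ) be a projection (C* = C, C² = C) such that A commutes with aB + bC. Then C₀₁ = C₁₀ = −(a/b)·s, C₀₀ is real, C₁₁ = 1 − C₀₀, and C₀₀(1 − C₀₀) = (a²/b²)·t(1−t); equivalently C₀₀ = 1/2 + ε·(1/2)√(1 − (4a²/b²)t(1−t)) for some ε ∈ {1, −1}. -/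
/-!
Commuting with the diagonal projection `A` kills the off-diagonal entries of `aB + bC`, which
pins down `C₀₁ = C₁₀ = -(a/b)s ≠ 0`. For a `2 × 2` idempotent, the `(0,1)` entry of `C² = C`
reads `C₀₁ (tr C - 1) = 0` and the `(0,0)` entry reads `C₀₀ (1 - C₀₀) = C₀₁ C₁₀`, so
`tr C = 1` and `C₀₀` is a real root of `x (1 - x) = (a²/b²) t (1 - t)`.
-/

open Matrix

namespace Matrix

theorem commute_diag_one_zero_iff {R : Type*} [Ring R] (M : Matrix (Fin 2) (Fin 2) R) :
    Commute !![1, 0; 0, 0] M ↔ M 0 1 = 0 ∧ M 1 0 = 0 := by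
  simp [Commute, SemiconjBy, ← Matrix.ext_iff, Fin.forall_fin_two, mul_apply, Fin.sum_univ_two,
    vecMul, dotProduct, eq_comm]

variable {R : Type*} [CommRing R] {C : Matrix (Fin 2) (Fin 2) R}

theorem apply_zero_zero_mul_one_sub_of_isIdempotentElem (hC : IsIdempotentElem C) :
    C 0 0 * (1 - C 0 0) = C 0 1 * C 1 0 := by
  have h := congrFun (congrFun hC.eq 0) 0
  simp only [mul_apply, Fin.sum_univ_two] at h
  linear_combination -h

theorem apply_one_one_eq_one_sub_of_isIdempotentElem [NoZeroDivisors R]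
    (hC : IsIdempotentElem C) (h01 : C 0 1 ≠ 0) : C 1 1 = 1 - C 0 0 := by
  have h := congrFun (congrFun hC.eq 0) 1
  simp only [mul_apply, Fin.sum_univ_two] at h
  have : C 0 1 * (C 0 0 + C 1 1 - 1) = 0 := by linear_combination h
  linear_combination (mul_eq_zero.mp this).resolve_left h01

end Matrix

theorem exists_sign_eq_half_add_sqrt_of_mul_one_sub_eq {x q : ℝ} (h : x * (1 - x) = q) :
    ∃ ε : ℝ, (ε = 1 ∨ ε = -1) ∧ x = 1 / 2 + ε * (1 / 2) * Real.sqrt (1 - 4 * q) := by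
  have hsqrt : Real.sqrt (1 - 4 * q) = |2 * x - 1| := by
    rw [← h, ← Real.sqrt_sq_eq_abs]; ring_nf
  rcases le_or_gt (1 / 2) x with hx | hx
  · exact ⟨1, .inl rfl, by rw [hsqrt, abs_of_nonneg (by linarith)]; ring⟩
  · exact ⟨-1, .inr rfl, by rw [hsqrt, abs_of_neg (by linarith)]; ring⟩

/-- for nonzero reals a, b, t ∈ (0,1), s = √(t(1−t)),
A = [[1,0],[0,0]], B = [[t,s],[s,1−t]] in M₂(ℂ), and a projection C such that A
commutes with aB + bC, the entries of C are determined as stated. -/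
theorem stmt16 (a b : ℝ) (ha : a ≠ 0) (hb : b ≠ 0)
    (t : ℝ) (ht : t ∈ Set.Ioo (0 : ℝ) 1)
    (s : ℝ) (hs : s = Real.sqrt (t * (1 - t)))
    (C : Matrix (Fin 2) (Fin 2) ℂ) (hCsa : star C = C) (hCidem : C * C = C)
    (hcomm : Commute (!![1, 0; 0, 0] : Matrix (Fin 2) (Fin 2) ℂ)
      ((a : ℂ) • (!![(t : ℂ), (s : ℂ); (s : ℂ), 1 - (t : ℂ)]) + (b : ℂ) • C)) :
    C 0 1 = ((-(a / b) * s : ℝ) : ℂ) ∧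
    C 1 0 = ((-(a / b) * s : ℝ) : ℂ) ∧
    (C 0 0).im = 0 ∧
    C 1 1 = 1 - C 0 0 ∧
    C 0 0 * (1 - C 0 0) = ((a ^ 2 / b ^ 2 * (t * (1 - t)) : ℝ) : ℂ) ∧
    ∃ ε : ℝ, (ε = 1 ∨ ε = -1) ∧
      C 0 0 = ((1 / 2 + ε * (1 / 2) *
        Real.sqrt (1 - 4 * a ^ 2 / b ^ 2 * (t * (1 - t))) : ℝ) : ℂ) := by
  obtain ⟨h01, h10⟩ := (commute_diag_one_zero_iff _).mp hcomm
  simp only [Matrix.add_apply, Matrix.smul_apply, of_apply, cons_val', cons_val_zero,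
    cons_val_one, cons_val_fin_one, smul_eq_mul] at h01 h10
  have hbC : (b : ℂ) ≠ 0 := by exact_mod_cast hb
  have hC01 : C 0 1 = ((-(a / b) * s : ℝ) : ℂ) := by
    push_cast; field_simp; linear_combination h01
  have hC10 : C 1 0 = ((-(a / b) * s : ℝ) : ℂ) := by
    push_cast; field_simp; linear_combination h10
  have htt : 0 < t * (1 - t) := mul_pos ht.1 (sub_pos.mpr ht.2)
  have hs_sq : s ^ 2 = t * (1 - t) := by rw [hs, Real.sq_sqrt htt.le]
  have hC01_ne : C 0 1 ≠ 0 := by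
    rw [hC01, Complex.ofReal_ne_zero]
    exact mul_ne_zero (neg_ne_zero.mpr (div_ne_zero ha hb)) (hs ▸ (Real.sqrt_pos.mpr htt).ne')
  have hC00_real : C 0 0 = ((C 0 0).re : ℂ) := (IsHermitian.coe_re_apply_self hCsa 0).symm
  have hprod : C 0 0 * (1 - C 0 0) = ((a ^ 2 / b ^ 2 * (t * (1 - t)) : ℝ) : ℂ) := by
    rw [apply_zero_zero_mul_one_sub_of_isIdempotentElem hCidem, hC01, hC10, ← hs_sq]
    push_cast; ring
  refine ⟨hC01, hC10, by rw [hC00_real, Complex.ofReal_im],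
    apply_one_one_eq_one_sub_of_isIdempotentElem hCidem hC01_ne, hprod, ?_⟩
  rw [hC00_real] at hprod ⊢
  obtain ⟨ε, hε, hx⟩ := exists_sign_eq_half_add_sqrt_of_mul_one_sub_eq (x := (C 0 0).re)
    (by exact_mod_cast hprod)
  exact ⟨ε, hε, by rw [hx]; ring_nf⟩
end

section
/- Let a, b be nonzero real numbers such that t := (b² + 2a²b − a²b² − a²)/(4a²b) lies in the open interval (0,1). Set s := √(t(1−t)) and z := (b − ab + a − 2at)/(2b). Then the matrices A := [[1,0],[0,0]], B := [[t,s],[s,1−t]], C := [[z, −(a/b)s],[−(a/b)s, 1−z]] in M₂(ℂ) are projections (X* = X and X² = X for X ∈ {A,B,C}), A commutes with aB + bC, B commutes with aA + C, and AB ≠ BA. -/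
set_option maxHeartbeats 1600000

/-- for nonzero reals a, b with t := (b² + 2a²b − a²b² − a²)/(4a²b) ∈ (0,1),
s := √(t(1−t)) and z := (b − ab + a − 2at)/(2b), the matrices A, B, C below are
projections, A commutes with aB + bC, B commutes with aA + C, and AB ≠ BA. -/
theorem stmt18 (a b : ℝ) (ha : a ≠ 0) (hb : b ≠ 0)
    (t : ℝ) (htdef : t = (b ^ 2 + 2 * a ^ 2 * b - a ^ 2 * b ^ 2 - a ^ 2) / (4 * a ^ 2 * b))
    (ht : t ∈ Set.Ioo (0 : ℝ) 1)
    (s : ℝ) (hs : s = Real.sqrt (t * (1 - t)))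
    (z : ℝ) (hz : z = (b - a * b + a - 2 * a * t) / (2 * b))
    (A B C : Matrix (Fin 2) (Fin 2) ℂ)
    (hA : A = !![1, 0; 0, 0])
    (hB : B = !![(t : ℂ), (s : ℂ); (s : ℂ), 1 - (t : ℂ)])
    (hC : C = !![(z : ℂ), ((-(a / b) * s : ℝ) : ℂ);
                 ((-(a / b) * s : ℝ) : ℂ), 1 - (z : ℂ)]) :
    (star A = A ∧ A * A = A) ∧
    (star B = B ∧ B * B = B) ∧
    (star C = C ∧ C * C = C) ∧
    Commute A ((a : ℂ) • B + (b : ℂ) • C) ∧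
    Commute B ((a : ℂ) • A + C) ∧
    A * B ≠ B * A := by
  obtain ⟨ht0, ht1⟩ := ht
  have htt : 0 < t * (1 - t) := mul_pos ht0 (by linarith)
  have hs2 : s ^ 2 = t * (1 - t) := by
    rw [hs, sq, Real.mul_self_sqrt htt.le]
  have hspos : 0 < s := by rw [hs]; exact Real.sqrt_pos.mpr htt
  have hz2 : z - z ^ 2 = (a / b) ^ 2 * (t * (1 - t)) := by
    subst hz htdef
    field_simp
    ring
  have hs2C : (s : ℂ) ^ 2 = (t : ℂ) * (1 - (t : ℂ)) := by
    have := congrArg (Complex.ofReal) hs2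
    push_cast at this
    exact this
  have hz2C : (z : ℂ) - (z : ℂ) ^ 2 = ((a : ℂ) / b) ^ 2 * ((t : ℂ) * (1 - (t : ℂ))) := by
    have := congrArg (Complex.ofReal) hz2
    push_cast at this
    exact this
  have hzC : (z : ℂ) = ((b : ℂ) - a * b + a - 2 * a * t) / (2 * b) := by
    have := congrArg (Complex.ofReal) hz
    push_cast at this
    exact this
  have hbC : (b : ℂ) ≠ 0 := by exact_mod_cast hb
  subst hA hB hC
  refine ⟨⟨?_, ?_⟩, ⟨?_, ?_⟩, ⟨?_, ?_⟩, ?_, ?_, ?_⟩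
  · ext i j
    fin_cases i <;> fin_cases j <;> simp [Matrix.conjTranspose_apply]
  · ext i j
    fin_cases i <;> fin_cases j <;> simp [Matrix.mul_apply, Fin.sum_univ_two]
  · ext i j
    fin_cases i <;> fin_cases j <;> simp [Matrix.conjTranspose_apply]
  · ext i j
    fin_cases i <;> fin_cases j <;>
      simp [Matrix.mul_apply, Fin.sum_univ_two] <;>
      first
        | ring1
        | linear_combination hs2C
  · ext i j
    fin_cases i <;> fin_cases j <;> simp [Matrix.conjTranspose_apply]
  · ext i j
    fin_cases i <;> fin_cases j <;>
      simp [Matrix.mul_apply, Fin.sum_univ_two] <;>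
      first
        | ring1
        | linear_combination ((a : ℂ) / b) ^ 2 * hs2C - hz2C
        | linear_combination ((a : ℂ) / b) ^ 2 * hs2C + hz2C
  · show _ * _ = _ * _
    ext i j
    fin_cases i <;> fin_cases j <;>
      simp [Matrix.mul_apply, Matrix.add_apply, Matrix.smul_apply, Fin.sum_univ_two] <;>
      first
        | ring1
        | (field_simp; ring1)
        | field_simp
  · show _ * _ = _ * _
    ext i j
    fin_cases i <;> fin_cases j <;>
      simp [Matrix.mul_apply, Matrix.add_apply, Matrix.smul_apply, Fin.sum_univ_two]
    all_goals rw [hzC]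
    all_goals field_simp
    all_goals ring
  · intro h
    have h01 := congrFun (congrFun h 0) 1
    simp [Matrix.mul_apply, Fin.sum_univ_two] at h01
    exact absurd (by exact_mod_cast h01 : (s : ℝ) = 0) hspos.ne'
end
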